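/- arXiv:1606.07715 — 3 statements merged into one kernel-verified Lean document; each statement's English description precedes it below -/
import Mathlib

section
/- Let I ⊆ [0,1] be a set of real numbers satisfying the DCC. Then the set of positive real numbers of the form 2g − 2 + b_1 + … + b_p, where g and p are nonnegative integers and b_1, …, b_p ∈ I, satisfies the DCC. (This is the set 𝒱(1,I) of volumes deg(K_X + B) = 2g − 2 + Σ b_i of one-dimensional semi log canonical models with coefficients in I.) -/
/-- A set `S ⊆ ℝ` satisfies the descending chain condition (DCC) if every
non-increasing sequence of elements of `S` is eventually constant. -/
def SatisfiesDCC (S : Set ℝ) : Prop :=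
  ∀ f : ℕ → ℝ, (∀ n, f n ∈ S) → Antitone f → ∃ N, ∀ m, N ≤ m → f m = f N

/-!
Both summands of `2g - 2 + ∑ bᵢ` range over partially well-ordered sets: `2g - 2` is monotone
in `g ∈ ℕ`, and the finite sums of elements of `I` form the additive submonoid generated by `I`,
which is partially well-ordered because `I` is and consists of nonnegative numbers. A sumset of
partially well-ordered sets is again partially well-ordered, and so is any subset of it.
-/

lemma satisfiesDCC_iff_isWF (S : Set ℝ) : SatisfiesDCC S ↔ S.IsWF := by
  constructor
  · intro h
    rw [Set.isWF_iff_no_descending_seq]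
    intro f hf hmem
    obtain ⟨N, hN⟩ := h f hmem hf.antitone
    exact (hf N.lt_succ_self).ne (hN (N + 1) N.le_succ)
  · intro h f hmem hf
    have hne : (Set.range f).Nonempty := Set.range_nonempty f
    have hwf : (Set.range f).IsWF := h.mono (Set.range_subset_iff.mpr hmem)
    obtain ⟨N, hN⟩ := hwf.min_mem hne
    refine ⟨N, fun m hm => le_antisymm (hf hm) ?_⟩
    rw [hN]
    exact hwf.min_le hne ⟨m, rfl⟩

lemma satisfiesDCC_iff_isPWO (S : Set ℝ) : SatisfiesDCC S ↔ S.IsPWO := by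
  rw [satisfiesDCC_iff_isWF, Set.isPWO_iff_isWF]

lemma Monotone.isPWO_range {α : Type*} [Preorder α] {f : ℕ → α} (hf : Monotone f) :
    (Set.range f).IsPWO := by
  simpa only [Set.image_univ] using (Set.IsPWO.of_linearOrder Set.univ).image_of_monotone hf

theorem stmt_2 (I : Set ℝ) (hI : I ⊆ Set.Icc 0 1) (hIdcc : SatisfiesDCC I) :
    SatisfiesDCC {x : ℝ | 0 < x ∧ ∃ (g p : ℕ) (b : Fin p → ℝ),
      (∀ j, b j ∈ I) ∧ x = 2 * (g : ℝ) - 2 + ∑ j, b j} := by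
  rw [satisfiesDCC_iff_isPWO] at hIdcc ⊢
  have hD : (Set.range fun g : ℕ => 2 * (g : ℝ) - 2).IsPWO :=
    Monotone.isPWO_range fun a b hab => by gcongr
  have hC : (AddSubmonoid.closure I : Set ℝ).IsPWO :=
    hIdcc.addSubmonoid_closure fun x hx => (hI hx).1
  refine (hD.add hC).mono ?_
  rintro x ⟨-, g, p, b, hb, rfl⟩
  exact Set.add_mem_add ⟨g, rfl⟩ (sum_mem fun j _ => AddSubmonoid.subset_closure (hb j))
end

section
/- Let D ⊆ (0, ∞) be a set of positive real numbers satisfying the DCC and let d > 0 be a real number. Then there are only finitely many finite multisets {d_1, …, d_k} of elements of D (k a nonnegative integer, repetitions allowed) such that d_1 + … + d_k = d. -/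
/-!
A DCC set of reals is well-founded, hence partially well-ordered, so by Higman's lemma every
infinite sequence of lists of its elements contains a pair `l₁, l₂` in which `l₁` is dominated
termwise by a sublist of `l₂`. If all elements are positive and both lists have the same sum,
such a domination must be an equality, so the lists with a given sum form a finite antichain;
every multiset is the image of a list.
-/

theorem SatisfiesDCC.isWF {S : Set ℝ} (hS : SatisfiesDCC S) : S.IsWF := by
  rw [Set.isWF_iff_no_descending_seq]
  intro f hf hmem
  obtain ⟨N, hN⟩ := hS f hmem hf.antitone
  exact (hf N.lt_succ_self).ne (hN (N + 1) N.le_succ)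

namespace List

variable {α : Type*} [AddCommMonoid α] [PartialOrder α] [IsOrderedCancelAddMonoid α]

theorem Forall₂.eq_of_sum_le {l₁ l₂ : List α} (h : Forall₂ (· ≤ ·) l₁ l₂)
    (hs : l₂.sum ≤ l₁.sum) : l₁ = l₂ := by
  induction h with
  | nil => rfl
  | @cons a b l₁ l₂ hab htail ih =>
    rw [sum_cons, sum_cons] at hs
    have hba : b ≤ a :=
      le_of_add_le_add_right (hs.trans (add_le_add le_rfl htail.sum_le_sum))
    obtain rfl : a = b := le_antisymm hab hba
    rw [ih (le_of_add_le_add_left hs)]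

theorem Sublist.eq_of_sum_le {l₁ l₂ : List α} (h : l₁ <+ l₂) (hpos : ∀ x ∈ l₂, 0 < x)
    (hs : l₂.sum ≤ l₁.sum) : l₁ = l₂ := by
  induction h with
  | slnil => rfl
  | @cons l₁ l₂ a h _ =>
    rw [sum_cons] at hs
    have hle : l₁.sum ≤ l₂.sum := h.sum_le_sum fun x hx => (hpos x (mem_cons_of_mem a hx)).le
    have ha : 0 < a := hpos a mem_cons_self
    exact absurd (hs.trans hle) (lt_add_of_pos_left _ ha).not_ge
  | @cons_cons l₁ l₂ a _ ih =>
    rw [sum_cons, sum_cons] at hs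
    rw [ih (fun x hx => hpos x (mem_cons_of_mem a hx)) (le_of_add_le_add_left hs)]

theorem SublistForall₂.eq_of_sum_le {l₁ l₂ : List α} (h : SublistForall₂ (· ≤ ·) l₁ l₂)
    (hpos : ∀ x ∈ l₂, 0 < x) (hs : l₂.sum ≤ l₁.sum) : l₁ = l₂ := by
  obtain ⟨l, hall, hsub⟩ := sublistForall₂_iff.1 h
  have hsub_le : l.sum ≤ l₂.sum := hsub.sum_le_sum fun x hx => (hpos x hx).le
  obtain rfl : l₁ = l := hall.eq_of_sum_le (hsub_le.trans hs)
  exact hsub.eq_of_sum_le hpos hs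

end List

section FixedSum

variable {α : Type*} [AddCommMonoid α] [PartialOrder α] [IsOrderedCancelAddMonoid α]

theorem Set.IsPWO.finite_lists_sum_eq {D : Set α} (hD : D.IsPWO) (hpos : ∀ x ∈ D, 0 < x)
    (d : α) : {l : List α | (∀ x ∈ l, x ∈ D) ∧ l.sum = d}.Finite := by
  have hHigman := hD.partiallyWellOrderedOn_sublistForall₂ (· ≤ ·)
  refine IsAntichain.finite_of_partiallyWellOrderedOn (r := List.SublistForall₂ (· ≤ ·)) ?_
    (hHigman.mono fun l hl => hl.1)
  intro l₁ hl₁ l₂ hl₂ hne hrel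
  exact hne (hrel.eq_of_sum_le (fun x hx => hpos x (hl₂.1 x hx)) (by rw [hl₁.2, hl₂.2]))

theorem Set.IsPWO.finite_multisets_sum_eq {D : Set α} (hD : D.IsPWO) (hpos : ∀ x ∈ D, 0 < x)
    (d : α) : {s : Multiset α | (∀ x ∈ s, x ∈ D) ∧ s.sum = d}.Finite := by
  refine ((hD.finite_lists_sum_eq hpos d).image (↑)).subset ?_
  rintro s ⟨hsD, hsum⟩
  exact ⟨s.toList, ⟨fun x hx => hsD x (Multiset.mem_toList.1 hx), by rwa [Multiset.sum_toList]⟩,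
    s.coe_toList⟩

end FixedSum

theorem stmt_6_general (D : Set ℝ) (hD : D ⊆ Set.Ioi 0) (hDdcc : SatisfiesDCC D)
    (d : ℝ) :
    Set.Finite {s : Multiset ℝ | (∀ x ∈ s, x ∈ D) ∧ s.sum = d} :=
  hDdcc.isWF.isPWO.finite_multisets_sum_eq (fun _ hx => hD hx) d

theorem stmt_6 (D : Set ℝ) (hD : D ⊆ Set.Ioi 0) (hDdcc : SatisfiesDCC D)
    (d : ℝ) (hd : 0 < d) :
    Set.Finite {s : Multiset ℝ | (∀ x ∈ s, x ∈ D) ∧ s.sum = d} :=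
  stmt_6_general D hD hDdcc d
end

section
/- Let J = { 1 − 1/n : n a positive integer } ∪ {1} be the standard coefficient set. Then D(J) ∩ [0,1] = J; that is, every number of the form (r − 1 + b_1 + … + b_p)/r with r a positive integer and b_1, …, b_p ∈ J which lies in the interval [0,1] again belongs to J, and conversely every element of J is of this form. (This expresses that the standard coefficient set is closed under taking the different.) -/
/-- The standard coefficient set `J = { 1 − 1/n : n ∈ ℕ, n ≥ 1 } ∪ {1}`. -/
def standardSet : Set ℝ :=
  {x | ∃ n : ℕ, 0 < n ∧ x = 1 - 1 / (n : ℝ)} ∪ {1}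

/-- The derived set `D(I)` of a set `I ⊆ [0,1]`:
`D(I) = { (r − 1 + i_1 + … + i_p)/r : r ≥ 1, p ≥ 0, i_j ∈ I }`. -/
def paperDerivedSet (I : Set ℝ) : Set ℝ :=
  {x | ∃ (r p : ℕ), 0 < r ∧ ∃ i : Fin p → ℝ, (∀ j, i j ∈ I) ∧
    x = ((r : ℝ) - 1 + ∑ j, i j) / r}

/-!
If `(r - 1 + s)/r ≤ 1` then `s ≤ 1`. Every element of `J` lies in `[0,1]` and every nonzero one
is at least `1/2`, so a sum `s ≤ 1` of elements of `J` has at most one nonzero summand or equals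
`1`; either way `s ∈ J`. Finally `(r - 1 + (1 - 1/n))/r = 1 - 1/(nr)` and `(r - 1 + 1)/r = 1`.
-/

open Finset

theorem one_sub_one_div_mem_standardSet {n : ℕ} (hn : 0 < n) :
    1 - 1 / (n : ℝ) ∈ standardSet :=
  Or.inl ⟨n, hn, rfl⟩

theorem zero_mem_standardSet : (0 : ℝ) ∈ standardSet := by
  simpa using one_sub_one_div_mem_standardSet one_pos

theorem standardSet_subset_Icc : standardSet ⊆ Set.Icc 0 1 := by
  rintro x (⟨n, hn, rfl⟩ | rfl)
  · have hn' : (1 : ℝ) ≤ n := by exact_mod_cast hn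
    constructor
    · rw [sub_nonneg, div_le_one (by linarith)]
      exact hn'
    · have : 0 < 1 / (n : ℝ) := by positivity
      linarith
  · exact ⟨zero_le_one, le_rfl⟩

theorem half_le_of_mem_standardSet {x : ℝ} (hx : x ∈ standardSet) (hx0 : x ≠ 0) :
    1 / 2 ≤ x := by
  rcases hx with ⟨n, hn, rfl⟩ | rfl
  · have hn2 : (2 : ℝ) ≤ n := by
      have : n ≠ 1 := by rintro rfl; simp at hx0
      exact_mod_cast (show 2 ≤ n by omega)
    have : 1 / (n : ℝ) ≤ 1 / 2 := one_div_le_one_div_of_le two_pos hn2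
    linarith
  · norm_num

theorem add_mem_standardSet {x y : ℝ} (hx : x ∈ standardSet) (hy : y ∈ standardSet)
    (hxy : x + y ≤ 1) : x + y ∈ standardSet := by
  by_cases hx0 : x = 0
  · simpa [hx0] using hy
  by_cases hy0 : y = 0
  · simpa [hy0] using hx
  have : x + y = 1 := by
    linarith [half_le_of_mem_standardSet hx hx0, half_le_of_mem_standardSet hy hy0]
  exact Or.inr this

theorem sum_mem_standardSet {ι : Type*} (s : Finset ι) {f : ι → ℝ}
    (hf : ∀ i ∈ s, f i ∈ standardSet) (hs : ∑ i ∈ s, f i ≤ 1) :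
    ∑ i ∈ s, f i ∈ standardSet := by
  classical
  induction s using Finset.induction_on with
  | empty => simpa using zero_mem_standardSet
  | insert a s ha ih =>
    rw [sum_insert ha] at hs ⊢
    have hfa := hf a (mem_insert_self a s)
    have hfs : ∀ i ∈ s, f i ∈ standardSet := fun i hi => hf i (mem_insert_of_mem hi)
    have hsum_le : ∑ i ∈ s, f i ≤ 1 := by
      linarith [(standardSet_subset_Icc hfa).1]
    exact add_mem_standardSet hfa (ih hfs hsum_le) hs

theorem sub_one_add_div_mem_standardSet {r : ℕ} (hr : 0 < r) {s : ℝ} (hs : s ∈ standardSet) :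
    ((r : ℝ) - 1 + s) / r ∈ standardSet := by
  have hr' : (r : ℝ) ≠ 0 := by positivity
  rcases hs with ⟨n, hn, rfl⟩ | rfl
  · have hn' : (n : ℝ) ≠ 0 := by positivity
    convert one_sub_one_div_mem_standardSet (Nat.mul_pos hn hr) using 1
    push_cast
    field_simp
    ring
  · right
    simp [hr']

theorem subset_paperDerivedSet (I : Set ℝ) : I ⊆ paperDerivedSet I :=
  fun x hx => ⟨1, 1, one_pos, fun _ => x, fun _ => hx, by simp⟩

theorem stmt_7 : paperDerivedSet standardSet ∩ Set.Icc 0 1 = standardSet := by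
  refine Set.Subset.antisymm ?_ fun x hx =>
    ⟨subset_paperDerivedSet _ hx, standardSet_subset_Icc hx⟩
  rintro x ⟨⟨r, p, hr, i, hi, rfl⟩, -, hx1⟩
  have hsum_le : ∑ j, i j ≤ 1 := by
    have hr' : (0 : ℝ) < r := by exact_mod_cast hr
    rw [div_le_one hr'] at hx1
    linarith
  exact sub_one_add_div_mem_standardSet hr (sum_mem_standardSet _ (fun j _ => hi j) hsum_le)
end
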